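/- arXiv:1211.4286 — 5 statements merged into one kernel-verified Lean document; each statement's English description precedes it below -/
import Mathlib

section
/- Any subgroup H of odd order of the group W₁ generated by diagonal ±1 matrices of determinant 1 and monomial matrices in GL_n(ℤ) is conjugate, by an element of the diagonal subgroup D₁ of determinant-1 sign matrices, to its image m(H) under the canonical splitting map onto the monomial matrices. -/
/-- Membership in `W₁ = D₁ ⋊ M ≤ GLₙ(ℤ)`: a signed permutation matrix whose sign part has
determinant `1`, i.e. whose nonzero entries (all `±1`) multiply to `1`. -/
def MemW1 {n : ℕ} (A : Matrix (Fin n) (Fin n) ℤ) : Prop :=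
  ∃ (σ : Equiv.Perm (Fin n)) (ε : Fin n → ℤ),
    (∀ j, ε j = 1 ∨ ε j = -1) ∧ (∏ j, ε j) = 1 ∧
      ∀ i j, A i j = if i = σ j then ε j else 0

/-!
Write `h ∈ H` as `h i j = [i = σ_h j] ε_h j`. Reading off column sums of `g * h` gives the
cocycle identity `ε_{gh} j = ε_g (σ_h j) ε_h j`. Since the signs are involutions, the norm
`d j = ∏_{h ∈ H} ε_h j` satisfies `d (σ_g j) = d j · ε_g j ^ |H| = d j · ε_g j` because `|H|` is
odd, so `δ = diag d` conjugates `|h|` to `h`; and `det δ = ∏_h ∏_j ε_h j = 1`.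
-/

open Matrix Finset

section MonomialForm

variable {ι R : Type*} [Fintype ι] [DecidableEq ι]

def HasMonomialForm [Zero R] (A : Matrix ι ι R) (σ : Equiv.Perm ι) (ε : ι → R) : Prop :=
  ∀ i j, A i j = if i = σ j then ε j else 0

variable {A B : Matrix ι ι R} {σ τ : Equiv.Perm ι} {ε η : ι → R}

theorem HasMonomialForm.sum_col [AddCommMonoid R] (hA : HasMonomialForm A σ ε) (j : ι) :
    ∑ i, A i j = ε j := by
  simp [hA _ j]

theorem HasMonomialForm.mul [NonUnitalNonAssocSemiring R] (hA : HasMonomialForm A σ ε)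
    (hB : HasMonomialForm B τ η) :
    HasMonomialForm (A * B) (σ * τ) (fun j => ε (τ j) * η j) := by
  intro i j
  rw [mul_apply, Finset.sum_eq_single (τ j) (fun k _ hk => by simp [hB k j, hk]) (by simp),
    hA, hB, if_pos rfl, Equiv.Perm.mul_apply]
  split_ifs <;> simp

theorem HasMonomialForm.eq_diagonal_mul_abs_mul_diagonal [Ring R] [LinearOrder R]
    [IsOrderedRing R] (hA : HasMonomialForm A σ ε) (hε : ∀ j, |ε j| = 1) {d : ι → R}
    (hd : ∀ j, d (σ j) * d j = ε j) :
    A = diagonal d * (Matrix.of fun i j => |A i j|) * diagonal d := by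
  ext i j
  rw [mul_diagonal, diagonal_mul, of_apply, hA i j]
  split_ifs with h
  · rw [hε, mul_one, h, hd]
  · simp

end MonomialForm

section CocycleNorm

variable {G ι M : Type*} [Fintype G] [CommMonoid M]

def cocycleNorm (ε : G → ι → M) (j : ι) : M :=
  ∏ g, ε g j

variable {ε : G → ι → M}

theorem cocycleNorm_mul_self (hsq : ∀ g j, ε g j * ε g j = 1) (j : ι) :
    cocycleNorm ε j * cocycleNorm ε j = 1 := by
  rw [cocycleNorm, ← prod_mul_distrib]
  exact prod_eq_one fun g _ => hsq g j

theorem cocycleNorm_apply_mul_cocycleNorm [Group G] (σ : G → ι → ι)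
    (hsq : ∀ g j, ε g j * ε g j = 1)
    (hcoc : ∀ g h j, ε (g * h) j = ε g (σ h j) * ε h j) (hodd : Odd (Nat.card G))
    (g : G) (j : ι) : cocycleNorm ε (σ g j) * cocycleNorm ε j = ε g j := by
  have hpow : ε g j ^ Fintype.card G = ε g j := by
    obtain ⟨k, hk⟩ := Nat.card_eq_fintype_card (α := G) ▸ hodd
    rw [hk, pow_succ, pow_mul, sq, hsq, one_pow, one_mul]
  have hshift : cocycleNorm ε (σ g j) = cocycleNorm ε j * ε g j :=
    calc ∏ h, ε h (σ g j)
        = ∏ h, ε (h * g) j * ε g j :=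
          prod_congr rfl fun h _ => by rw [hcoc, mul_assoc, hsq, mul_one]
      _ = (∏ h, ε (h * g) j) * ε g j ^ Fintype.card G := by
          rw [prod_mul_distrib, prod_const, card_univ]
      _ = cocycleNorm ε j * ε g j := by
          rw [Fintype.prod_equiv (Equiv.mulRight g) (fun h => ε (h * g) j) (fun h => ε h j)
            fun _ => rfl, hpow, cocycleNorm]
  rw [hshift, mul_right_comm, cocycleNorm_mul_self hsq, one_mul]

end CocycleNorm

/-- Any subgroup `H` of odd order of the group `W₁` generated by the diagonal `±1` matrices of
determinant `1` and the monomial (permutation) matrices in `GLₙ(ℤ)` is conjugate, by an element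
`δ` of the group `D₁` of determinant-one sign matrices, to its image `m(H)` under the canonical
splitting `m : W₁ → M` onto the permutation matrices (here `m(h)` has entries `|h i j|`, and
`δ⁻¹ = δ`). -/
theorem odd_order_subgroup_of_W1_conjugate_to_permutation_part {n : ℕ}
    (H : Subgroup (Matrix (Fin n) (Fin n) ℤ)ˣ)
    (hW : ∀ h ∈ H, MemW1 (h : Matrix (Fin n) (Fin n) ℤ))
    (hodd : Odd (Nat.card H)) :
    ∃ δ : Matrix (Fin n) (Fin n) ℤ,
      (∀ i, δ i i = 1 ∨ δ i i = -1) ∧ (∀ i j, i ≠ j → δ i j = 0) ∧ δ.det = 1 ∧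
      δ * δ = 1 ∧
      ∀ h ∈ H, (h : Matrix (Fin n) (Fin n) ℤ)
        = δ * (Matrix.of fun i j => |(h : Matrix (Fin n) (Fin n) ℤ) i j|) * δ := by
  have : Finite H := Nat.finite_of_card_ne_zero hodd.pos.ne'
  have := Fintype.ofFinite H
  choose σ ε hsign hdet hform using fun h : H => hW h h.2
  replace hform : ∀ h : H,
      HasMonomialForm ((h : (Matrix (Fin n) (Fin n) ℤ)ˣ) : Matrix (Fin n) (Fin n) ℤ) (σ h) (ε h) :=
    hform
  have hsq : ∀ h j, ε h j * ε h j = 1 := fun h j => mul_self_eq_one_iff.mpr (hsign h j)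
  have hcoc : ∀ g h j, ε (g * h) j = ε g (σ h j) * ε h j := fun g h j =>
    ((hform (g * h)).sum_col j).symm.trans (((hform g).mul (hform h)).sum_col j)
  have hd := cocycleNorm_apply_mul_cocycleNorm (fun h => σ h) hsq hcoc hodd
  refine ⟨diagonal (cocycleNorm ε), fun i => ?_, fun i j => diagonal_apply_ne _,
    ?_, ?_, fun h hh => (hform ⟨h, hh⟩).eq_diagonal_mul_abs_mul_diagonal ?_ (hd ⟨h, hh⟩)⟩
  · simpa using mul_self_eq_one_iff.mp (cocycleNorm_mul_self hsq i)
  · rw [det_diagonal, show ∏ j, cocycleNorm ε j = ∏ j, ∏ h, ε h j from rfl, prod_comm]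
    exact prod_eq_one fun h _ => hdet h
  · rw [diagonal_mul_diagonal, ← diagonal_one]
    exact congrArg diagonal (funext (cocycleNorm_mul_self hsq))
  · intro j
    rcases hsign ⟨h, hh⟩ j with e | e <;> simp [e]
end

section
/- Let d ≥ 1, X a set with 2d−1 elements, G a solvable subgroup of Sym(X) permuting transitively the d-element subsets of X, o ∈ X, and G_o the stabilizer of o. If G is transitive on X, then G_o is a maximal subgroup of G. -/
/-!
For a transitive action, the point stabilizer is maximal exactly when every block is trivial.
A nontrivial block `B` has `b ≥ 2` points and `k ≥ 2` translates with `b * k = 2d - 1`, so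
`b, k ≤ d - 1`. Some `g ∈ G` maps a `d`-set containing `B` onto a `d`-set avoiding a transversal
of the translates of `B`, although the image contains the translate `g • B`.
-/

open MulAction Pointwise Set

theorem Set.exists_ncard_le_forall_inter_nonempty {α : Type*} {𝒞 : Set (Set α)}
    (h𝒞 : 𝒞.Finite) (hne : ∀ C ∈ 𝒞, C.Nonempty) :
    ∃ A : Set α, A.ncard ≤ 𝒞.ncard ∧ ∀ C ∈ 𝒞, (A ∩ C).Nonempty := by
  have := h𝒞.to_subtype
  let pick : 𝒞 → α := fun C => (hne C C.2).some
  refine ⟨range pick, ?_, fun C hC => ⟨_, ⟨⟨C, hC⟩, rfl⟩, (hne C hC).some_mem⟩⟩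
  simpa only [Nat.card_coe_set_eq] using Finite.card_range_le pick

theorem MulAction.IsPreprimitive.of_exists_smul_eq_of_ncard_eq {G X : Type*} [Group G]
    [MulAction G X] [Finite X] [IsPretransitive G X] {d : ℕ}
    (hd₁ : Nat.card X ≤ 2 * d + 1) (hd₂ : 2 * d ≤ Nat.card X + 1)
    (htrans : ∀ s t : Set X, s.ncard = d → t.ncard = d → ∃ g : G, g • s = t) :
    IsPreprimitive G X := by
  refine ⟨fun {B} hB => ?_⟩
  by_contra hB_nontrivial
  obtain ⟨hB_nt, hB_univ⟩ := not_or.1 hB_nontrivial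
  have hb : 2 * B.ncard ≤ Nat.card X := by
    by_contra h; exact hB_univ (hB.eq_univ_of_card_lt (by omega))
  have hk : 2 * (orbit G B).ncard ≤ Nat.card X := by
    by_contra h; exact hB_nt (hB.subsingleton_of_card_lt (by omega))
  obtain ⟨S₁, hBS₁, -, hS₁⟩ :=
    exists_subsuperset_card_eq (n := d) (subset_univ B) (by omega) (by rw [ncard_univ]; omega)
  obtain ⟨A, hA, hA_meets⟩ := exists_ncard_le_forall_inter_nonempty (toFinite (orbit G B))
    (by rintro _ ⟨g, rfl⟩; exact (not_subsingleton_iff.1 hB_nt).nonempty.smul_set)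
  obtain ⟨S₂, hS₂A, hS₂⟩ := exists_subset_card_eq (s := Aᶜ) (n := d)
    (by rw [ncard_compl]; omega)
  obtain ⟨g, rfl⟩ := htrans S₁ S₂ hS₁ hS₂
  obtain ⟨x, hxA, hxB⟩ := hA_meets (g • B) (mem_orbit B g)
  exact hS₂A (smul_set_mono hBS₁ hxB) hxA

theorem stabilizer_is_maximal_subgroup_general
    {X : Type*} [Fintype X] [DecidableEq X] {d : ℕ}
    (hcard : Fintype.card X = 2 * d - 1)
    (G : Subgroup (Equiv.Perm X))
    (htrans : ∀ s t : Finset X, s.card = d → t.card = d → ∃ g ∈ G, s.image ⇑g = t)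
    (o : X)
    (htransX : ∀ x y : X, ∃ g ∈ G, g x = y) :
    ¬ ∃ H : Subgroup G,
        (MulAction.stabilizer (Equiv.Perm X) o).comap G.subtype < H ∧ H < ⊤ := by
  rintro ⟨H, hKH, hHtop⟩
  change stabilizer G o < H at hKH
  obtain hX | hX := subsingleton_or_nontrivial X
  · have hK_top : stabilizer G o = ⊤ := eq_top_iff.2 fun g _ => Subsingleton.elim (g • o) o
    exact hKH.not_ge (hK_top ▸ le_top)
  have : IsPretransitive G X :=
    ⟨fun x y => let ⟨g, hg, hgx⟩ := htransX x y; ⟨⟨g, hg⟩, hgx⟩⟩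
  have htrans_set : ∀ s t : Set X, s.ncard = d → t.ncard = d → ∃ g : G, g • s = t := by
    intro s t hs ht
    obtain ⟨g, hg, hst⟩ := htrans (toFinite s).toFinset (toFinite t).toFinset
      (by rwa [← ncard_eq_toFinset_card]) (by rwa [← ncard_eq_toFinset_card])
    refine ⟨⟨g, hg⟩, ?_⟩
    simpa [← image_smul] using congrArg ((↑) : Finset X → Set X) hst
  have hn : Nat.card X = 2 * d - 1 := by rw [Nat.card_eq_fintype_card, hcard]
  have : IsPreprimitive G X :=
    .of_exists_smul_eq_of_ncard_eq (d := d) (by omega) (by omega) htrans_set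
  exact hHtop.ne ((IsPreprimitive.isCoatom_stabilizer_of_isPreprimitive G o).lt_iff.1 hKH)

/-- Let `d ≥ 1`, `X` a set with `2d − 1` elements, `G` a solvable subgroup of `Sym(X)` permuting
transitively the `d`-element subsets of `X`, `o ∈ X`, and `G_o` the stabilizer of `o` in `G`.
If `G` is transitive on `X`, then `G_o` is a maximal subgroup of `G`. -/
theorem stabilizer_is_maximal_subgroup
    {X : Type*} [Fintype X] [DecidableEq X] {d : ℕ} (hd : 1 ≤ d)
    (hcard : Fintype.card X = 2 * d - 1)
    (G : Subgroup (Equiv.Perm X)) (hsolv : IsSolvable G)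
    (htrans : ∀ s t : Finset X, s.card = d → t.card = d → ∃ g ∈ G, s.image ⇑g = t)
    (o : X)
    (htransX : ∀ x y : X, ∃ g ∈ G, g x = y) :
    ¬ ∃ H : Subgroup G,
        (MulAction.stabilizer (Equiv.Perm X) o).comap G.subtype < H ∧ H < ⊤ :=
  stabilizer_is_maximal_subgroup_general hcard G htrans o htransX
end

section
/- Let d ≥ 1 be an integer, X a finite set with 2d elements, and G a solvable subgroup of Sym(X) permuting transitively the subsets of X of cardinality d. Then either |X|=2 and G = Sym(X), or |X|=4 and G is Sym(X) or Alt(X). -/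
/-!
For `d = 1` and `d = 2` counting suffices: `binom(2d, d)` and `2d` divide `|G|`, which forces
`G = S₂`, respectively `[S₄ : G] ≤ 2`.

For `d ≥ 3`, a solvable `G` has a nontrivial abelian subgroup `A` normalized by `G`. Homogeneity
on half-sets makes `A` transitive, hence regular of order `2d`. Every prime `p` with `d < p < 2d`
divides `binom(2d, d)`, so `G` contains an element `σ` of order `p`. Counting modulo `p` the fixed
points of conjugation by `σ` on `A` shows that `σ` centralizes only `1` in `A` and that
`p = 2d - 1`; the same count on the involutions of `A` shows that `A` is elementary abelian, so
`2d` is a power of two. Bertrand's postulate for `d - 1` then yields a prime `q` with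
`d < q < 2d - 1`, a contradiction.
-/

open Equiv Finset

theorem Nat.eq_one_of_dvd_of_modEq {e n p : ℕ} (hp : p.Prime) (hnp : n < 2 * p)
    (hen : e ∣ n) (hne : e < n) (hmod : e ≡ n [MOD p]) : e = 1 ∧ n = p + 1 := by
  obtain ⟨m, rfl⟩ := hen
  have hm : 2 ≤ m := by
    by_contra! h
    interval_cases m <;> simp at hne
  have hep : e < p := by nlinarith
  have hsub : e * m - e = p := by
    obtain ⟨c, hc⟩ := (Nat.modEq_iff_dvd' hne.le).mp hmod
    obtain rfl | rfl | hc2 : c = 0 ∨ c = 1 ∨ 2 ≤ c := by omega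
    · omega
    · omega
    · have := Nat.mul_le_mul_left p hc2
      omega
  have hdvd : e ∣ p := hsub ▸ Nat.dvd_sub (dvd_mul_right e m) dvd_rfl
  rcases hp.eq_one_or_self_of_dvd e hdvd with h | h <;> omega

theorem Nat.exists_prime_lt_and_add_two_le_of_two_mul_eq_two_pow {d k : ℕ} (hd : 3 ≤ d)
    (hdk : 2 * d = 2 ^ k) : ∃ q, q.Prime ∧ d < q ∧ q + 2 ≤ 2 * d := by
  obtain ⟨q, hq, hdq, hqd⟩ := Nat.exists_prime_lt_and_le_two_mul (d - 1) (by omega)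
  refine ⟨q, hq, ?_, by omega⟩
  have h2d : 2 ∣ d := by
    obtain _ | _ | k := k
    · omega
    · omega
    · exact ⟨2 ^ k, by rw [pow_succ, pow_succ] at hdk; omega⟩
  by_contra! hqd
  obtain rfl : q = d := by omega
  rcases hq.eq_one_or_self_of_dvd 2 h2d with h | h <;> omega

theorem card_modEq_card_commute {M : Type*} [Group M] [Finite M] {σ : M} {p : ℕ} [Fact p.Prime]
    (hσ : σ ^ p = 1) {P : M → Prop} (hP : ∀ a, P (σ * a * σ⁻¹) ↔ P a) :
    Nat.card {a // P a ∧ Commute σ a} ≡ Nat.card {a // P a} [MOD p] := by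
  classical
  have := Fintype.ofFinite M
  let π := MulAut.toPerm M (MulAut.conj σ)
  have hπa : ∀ a, π a = σ * a * σ⁻¹ := fun _ => rfl
  have hπP : ∀ a, P (π a) ↔ P a := hP
  have hπ : π.subtypePerm hπP ^ p ^ 1 = 1 := by
    have hπp : π ^ p = 1 := by simp only [π, ← map_pow, hσ, map_one]
    rw [pow_one, Perm.subtypePerm_pow]
    ext a
    simp [hπp]
  have key := Perm.card_compl_support_modEq hπ
  rw [← Nat.card_eq_fintype_card] at key
  convert key using 1
  rw [← Fintype.card_coe, ← Nat.card_eq_fintype_card]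
  refine Nat.card_congr ((subtypeSubtypeEquivSubtypeInter P _).symm.trans (subtypeEquivRight ?_))
  intro a
  simp [hπa, Perm.mem_support, Commute, SemiconjBy, Subtype.ext_iff, mul_inv_eq_iff_eq_mul]

theorem exists_normal_ne_bot_isMulCommutative (H : Type*) [Group H] [Group.IsSolvable H]
    [Nontrivial H] : ∃ N : Subgroup H, N.Normal ∧ N ≠ ⊥ ∧ IsMulCommutative N := by
  classical
  have hex : ∃ n, derivedSeries H n = ⊥ := Group.IsSolvable.solvable
  have hn : Nat.find hex ≠ 0 := fun h => by
    have := Nat.find_spec hex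
    rw [h, derivedSeries_zero] at this
    exact top_ne_bot this
  refine ⟨derivedSeries H (Nat.find hex - 1), derivedSeries_normal _ _,
    Nat.find_min hex (by omega), ?_⟩
  rw [← Subgroup.commutator_self_eq_bot_iff, ← derivedSeries_succ,
    Nat.sub_add_cancel (Nat.one_le_iff_ne_zero.mpr hn)]
  exact Nat.find_spec hex

theorem MulAction.exists_two_mul_card_le_and_forall_exists_smul_mem {H X : Type*} [Group H]
    [MulAction H X] [Fintype X] (h : ∀ x : X, ∃ g : H, g • x ≠ x) :
    ∃ R : Finset X, 2 * R.card ≤ Fintype.card X ∧ ∀ x, ∃ g : H, g • x ∈ R := by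
  classical
  let Ω := orbitRel.Quotient H X
  refine ⟨univ.image fun ω : Ω => ω.out, ?_, fun x => ?_⟩
  · have horbit (ω : Ω) : 2 ≤ Nat.card (orbit H ω.out) := by
      obtain ⟨g, hg⟩ := h ω.out
      rw [Nat.card_coe_set_eq]
      exact (Set.one_lt_ncard_iff).mpr ⟨_, _, mem_orbit _ g, mem_orbit_self _, hg⟩
    calc 2 * #(univ.image fun ω : Ω => ω.out)
        ≤ ∑ _ω : Ω, 2 := by rw [sum_const, smul_eq_mul, mul_comm]; gcongr; exact card_image_le
      _ ≤ ∑ ω : Ω, Nat.card (orbit H ω.out) := sum_le_sum fun ω _ => horbit ω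
      _ = Fintype.card X := by
        rw [← Nat.card_sigma, ← Nat.card_congr (selfEquivSigmaOrbits H X),
          Nat.card_eq_fintype_card]
  · obtain ⟨g, hg⟩ := (Quotient.mk_out (s := orbitRel H X) x)
    exact ⟨g, by simp [hg]⟩

theorem Equiv.Perm.eq_top_or_eq_alternatingGroup_of_index_le_two {α : Type*} [Fintype α]
    [DecidableEq α] {G : Subgroup (Perm α)} (hG : G.index ≤ 2) :
    G = ⊤ ∨ G = alternatingGroup α := by
  have := G.index_ne_zero_of_finite
  obtain h | h : G.index = 1 ∨ G.index = 2 := by omega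
  · exact .inl (Subgroup.index_eq_one.mp h)
  · exact .inr (eq_alternatingGroup_of_index_eq_two h)

namespace Subgroup

theorem exists_isMulCommutative_le_normalizer {M : Type*} [Group M] {G : Subgroup M}
    [Group.IsSolvable G] (hG : G ≠ ⊥) :
    ∃ A : Subgroup M, A ≠ ⊥ ∧ IsMulCommutative A ∧ G ≤ normalizer A := by
  have := (nontrivial_iff_ne_bot G).mpr hG
  obtain ⟨N, hN, hNbot, hNcomm⟩ := exists_normal_ne_bot_isMulCommutative G
  refine ⟨N.map G.subtype, (map_eq_bot_iff_of_injective _ G.subtype_injective).not.mpr hNbot,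
    ?_, ?_⟩
  · rw [← commutator_self_eq_bot_iff, ← map_commutator, commutator_self_eq_bot_iff.mpr hNcomm,
      map_bot]
  · rw [← normal_subgroupOf_iff_le_normalizer (map_subtype_le N), subgroupOf,
      comap_map_eq_self_of_injective G.subtype_injective]
    exact hN

theorem sq_eq_one_of_card_eq_prime_add_one {M : Type*} [Group M] [Finite M] {A : Subgroup M}
    {σ : M} (hσA : σ ∈ normalizer A) {p : ℕ} [Fact p.Prime] (hσ : σ ^ p = 1)
    (hA : Nat.card A = p + 1) (h2 : 2 ∣ Nat.card A) (hfree : ∀ a ∈ A, Commute σ a → a = 1) :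
    ∀ a ∈ A, a ^ 2 = 1 := by
  let W := {a // a ∈ A ∧ a ^ 2 = 1}
  have hmod : 1 ≡ Nat.card W [MOD p] := by
    refine (Nat.card_eq_one_iff_exists.mpr ?_) ▸ card_modEq_card_commute hσ fun a =>
      and_congr (mem_normalizer_iff.mp hσA a).symm (by rw [conj_pow, conj_eq_one_iff])
    exact ⟨⟨1, ⟨A.one_mem, one_pow 2⟩, Commute.one_right σ⟩,
      fun b => Subtype.ext (hfree b b.2.1.1 b.2.2)⟩
  obtain ⟨b, hb⟩ := exists_prime_orderOf_dvd_card' 2 h2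
  have : Nontrivial W := ⟨⟨1, A.one_mem, one_pow 2⟩, ⟨b, b.2, by
    rw [← hb, ← orderOf_coe]; exact pow_orderOf_eq_one _⟩, fun h => by
      have : b = 1 := Subtype.ext (congrArg Subtype.val h).symm
      simp [this] at hb⟩
  have hW : p + 1 ≤ Nat.card W := by
    have := Finite.one_lt_card (α := W)
    have := (Nat.modEq_iff_dvd' this.le).mp hmod
    have := Nat.le_of_dvd (by omega) this
    omega
  have hinj : Function.Injective fun w : W => (⟨w.1, w.2.1⟩ : A) := fun v w h =>
    Subtype.ext (by simpa [Subtype.ext_iff] using h)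
  intro a ha
  obtain ⟨w, hw⟩ := (hinj.bijective_of_nat_card_le (hA ▸ hW)).2 ⟨a, ha⟩
  simp only [Subtype.ext_iff] at hw
  exact hw ▸ w.2.2

section Regular

variable {X : Type*} {A : Subgroup (Perm X)} [MulAction.IsPretransitive A X]

theorem eq_one_of_forall_commute_of_apply_eq {τ : Perm X} (hτ : ∀ a ∈ A, Commute τ a) {x : X}
    (hx : τ x = x) : τ = 1 := by
  ext y
  obtain ⟨a, rfl⟩ := MulAction.exists_smul_eq A x y
  change τ ((a : Perm X) x) = (a : Perm X) x
  rw [← Perm.mul_apply, (hτ a a.2).eq, Perm.mul_apply, hx]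

variable [IsMulCommutative A]

theorem mem_of_forall_commute {τ : Perm X} (hτ : ∀ a ∈ A, Commute τ a) : τ ∈ A := by
  rcases isEmpty_or_nonempty X with hX | ⟨⟨x⟩⟩
  · exact Subsingleton.elim τ 1 ▸ A.one_mem
  obtain ⟨a, ha⟩ := MulAction.exists_smul_eq A x (τ x)
  have : (a : Perm X)⁻¹ * τ = 1 := by
    refine eq_one_of_forall_commute_of_apply_eq (A := A) (x := x) (fun b hb => ?_) ?_
    · exact (Commute.inv_left (setLike_mul_comm a.2 hb)).mul_left (hτ b hb)
    · rw [Perm.mul_apply, Perm.inv_eq_iff_eq, ← ha]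
      rfl
  exact inv_mul_eq_one.mp this ▸ a.2

theorem natCard_eq_card_of_isPretransitive [Fintype X] [Nonempty X] :
    Nat.card A = Fintype.card X := by
  obtain ⟨x⟩ := ‹Nonempty X›
  rw [← Nat.card_eq_fintype_card]
  refine Nat.card_eq_of_bijective (fun a : A => a • x) ⟨fun a b hab => ?_,
    MulAction.exists_smul_eq A x⟩
  have : (b : Perm X)⁻¹ * a = 1 := by
    refine eq_one_of_forall_commute_of_apply_eq (A := A) (x := x) (fun c hc => ?_) ?_
    · exact (Commute.inv_left (setLike_mul_comm b.2 hc)).mul_left (setLike_mul_comm a.2 hc)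
    · rw [Perm.mul_apply, Perm.inv_eq_iff_eq]
      exact hab
  exact Subtype.ext (inv_mul_eq_one.mp this).symm

theorem card_eq_add_one_and_eq_one_of_commute [Fintype X] {σ : Perm X}
    (hσA : σ ∈ normalizer A) {p : ℕ} (hp : p.Prime) (hσ : orderOf σ = p) (hpX : p < Fintype.card X)
    (hXp : Fintype.card X < 2 * p) : Fintype.card X = p + 1 ∧ ∀ a ∈ A, Commute σ a → a = 1 := by
  have := Fact.mk hp
  have : Nonempty X := Fintype.card_pos_iff.mp (by omega)
  let C := A ⊓ centralizer {σ}
  have hC : Nat.card C = Nat.card {a // a ∈ A ∧ Commute σ a} := Nat.card_congr <|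
    subtypeEquivRight fun a => by
      simp [C, mem_centralizer_singleton_iff, Commute, SemiconjBy, eq_comm]
  have hmod : Nat.card C ≡ Nat.card A [MOD p] := hC ▸ card_modEq_card_commute
    (hσ ▸ pow_orderOf_eq_one σ) fun a => (mem_normalizer_iff.mp hσA a).symm
  have hCA : C ≠ A := fun hCA => by
    have hσmem : σ ∈ A := mem_of_forall_commute fun a ha =>
      (mem_centralizer_singleton_iff.mp (hCA ▸ ha : a ∈ C).2).symm
    have := _root_.orderOf_dvd_natCard (⟨σ, hσmem⟩ : A)
    rw [orderOf_mk, hσ, natCard_eq_card_of_isPretransitive] at this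
    have := Nat.eq_of_dvd_of_lt_two_mul (by omega) this hXp
    omega
  have hlt : Nat.card C < Nat.card A := (card_le_of_le inf_le_left).lt_of_ne
    fun h => hCA (eq_of_le_of_card_ge inf_le_left h.ge)
  rw [natCard_eq_card_of_isPretransitive (A := A)] at hmod hlt
  obtain ⟨hC1, hX⟩ := Nat.eq_one_of_dvd_of_modEq hp hXp
    (natCard_eq_card_of_isPretransitive (A := A) ▸ card_dvd_of_le inf_le_left) hlt hmod
  refine ⟨hX, fun a ha hσa => ?_⟩
  have : a ∈ C := ⟨ha, mem_centralizer_singleton_iff.mpr hσa.eq.symm⟩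
  rwa [card_eq_one.mp hC1, mem_bot] at this

end Regular

variable {X : Type*} [Fintype X] [DecidableEq X]

def IsHomogeneous (G : Subgroup (Perm X)) (k : ℕ) : Prop :=
  ∀ s t : Finset X, s.card = k → t.card = k → ∃ g ∈ G, s.image ⇑g = t

namespace IsHomogeneous

variable {G : Subgroup (Perm X)} {k : ℕ}

-- Trading a point satisfying `P` for one that does not, inside a `k`-set, changes the number of
-- its points satisfying `P`.
theorem forall_or_forall_not (hG : G.IsHomogeneous k) (hk : 0 < k) (hkX : k < Fintype.card X)
    {P : X → Prop} (hP : ∀ g ∈ G, ∀ x, P (g x) ↔ P x) :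
    (∀ x, P x) ∨ ∀ x, ¬ P x := by
  classical
  by_contra! ⟨⟨y, hy⟩, ⟨x, hx⟩⟩
  have hxy : x ≠ y := by rintro rfl; exact hy hx
  obtain ⟨u, hu, hucard⟩ := exists_subset_card_eq (s := univ \ {x, y}) (n := k - 1) (by
    rw [card_sdiff_of_subset (subset_univ _), card_univ, card_pair hxy]; omega)
  have hxu : x ∉ u := fun h => by simpa using hu h
  have hyu : y ∉ u := fun h => by simpa using hu h
  obtain ⟨g, hg, hgst⟩ := hG (insert x u) (insert y u)
    (by rw [card_insert_of_notMem hxu]; omega) (by rw [card_insert_of_notMem hyu]; omega)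
  have hinv (s : Finset X) : #((s.image g).filter P) = #(s.filter P) := by
    simp [filter_image, card_image_of_injective _ g.injective, hP g hg]
  have hcount := hinv (insert x u)
  rw [hgst, filter_insert, filter_insert, if_pos hx, if_neg hy,
    card_insert_of_notMem (by simp [hxu])] at hcount
  omega

open scoped Pointwise in
theorem choose_dvd_natCard (hG : G.IsHomogeneous k) (hkX : k ≤ Fintype.card X) :
    (Fintype.card X).choose k ∣ Nat.card G := by
  obtain ⟨s, -, hs⟩ := exists_subset_card_eq (s := (univ : Finset X)) (n := k) (by rwa [card_univ])
  have horbit : MulAction.orbit G s = ↑(powersetCard k (univ : Finset X)) := by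
    ext t
    rw [mem_coe, mem_powersetCard_univ]
    refine ⟨?_, fun ht => ?_⟩
    · rintro ⟨g, rfl⟩
      rwa [card_smul_finset]
    · obtain ⟨g, hg, rfl⟩ := hG s t hs ht
      exact ⟨⟨g, hg⟩, rfl⟩
  have := (MulAction.stabilizer G s).index_dvd_card
  rwa [MulAction.index_stabilizer, horbit, Set.ncard_coe_finset, card_powersetCard,
    card_univ] at this

theorem isPretransitive (hG : G.IsHomogeneous k) (hk : 0 < k) (hkX : k < Fintype.card X) :
    MulAction.IsPretransitive G X := by
  refine ⟨fun x y => ?_⟩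
  have := hG.forall_or_forall_not hk hkX (P := (· ∈ MulAction.orbit G x)) fun g hg z => by
    rw [← MulAction.orbit_eq_iff, ← MulAction.orbit_eq_iff, ← MulAction.orbit_smul ⟨g, hg⟩ z]
    rfl
  exact this.resolve_right (fun h => h x (MulAction.mem_orbit_self x)) y

theorem card_dvd_natCard (hG : G.IsHomogeneous k) (hk : 0 < k) (hkX : k < Fintype.card X) :
    Fintype.card X ∣ Nat.card G := by
  obtain ⟨x⟩ : Nonempty X := Fintype.card_pos_iff.mp (by omega)
  have := hG.isPretransitive hk hkX
  have := (MulAction.stabilizer G x).index_dvd_card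
  rwa [MulAction.index_stabilizer_of_transitive, Nat.card_eq_fintype_card] at this

theorem eq_top_of_card_eq_two (hG : G.IsHomogeneous 1) (hX : Fintype.card X = 2) : G = ⊤ := by
  have h2 : 2 ∣ Nat.card G := by simpa [hX] using hG.choose_dvd_natCard (by omega)
  have hperm : Nat.card (Perm X) = 2 := by rw [Nat.card_perm, Nat.card_eq_fintype_card, hX]; rfl
  exact eq_top_of_card_eq G <|
    (Nat.dvd_antisymm (hperm ▸ card_subgroup_dvd_card G) h2).trans hperm.symm

theorem eq_top_or_eq_alternatingGroup (hG : G.IsHomogeneous 2) (hX : Fintype.card X = 4) :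
    G = ⊤ ∨ G = alternatingGroup X := by
  have h6 : (4).choose 2 ∣ Nat.card G := hX ▸ hG.choose_dvd_natCard (by omega)
  have h4 : 4 ∣ Nat.card G := hX ▸ hG.card_dvd_natCard (by omega) (by omega)
  have h12 : 12 ∣ Nat.card G :=
    Nat.Coprime.mul_dvd_of_dvd_of_dvd (by norm_num) h4 ((by decide : 3 ∣ (4).choose 2).trans h6)
  have hindex : G.index * Nat.card G = 2 * 12 := by
    rw [index_mul_card, Nat.card_perm, Nat.card_eq_fintype_card, hX]; rfl
  refine Perm.eq_top_or_eq_alternatingGroup_of_index_le_two (Nat.le_of_dvd two_pos ?_)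
  exact Nat.dvd_of_mul_dvd_mul_right (by norm_num) (hindex ▸ mul_dvd_mul_left G.index h12)

variable {A : Subgroup (Perm X)}

theorem exists_smul_ne_of_le_normalizer (hG : G.IsHomogeneous k) (hk : 0 < k)
    (hkX : k < Fintype.card X) (hGA : G ≤ normalizer A) (hA : A ≠ ⊥) (x : X) :
    ∃ a : A, a • x ≠ x := by
  have hfix := hG.forall_or_forall_not hk hkX (P := fun y => ∀ a ∈ A, a y = y) fun g hg y => by
    refine ⟨fun h a ha => ?_, fun h a ha => ?_⟩
    · simpa using h _ ((mem_normalizer_iff.mp (hGA hg) a).mp ha)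
    · have := h _ ((mem_normalizer_iff''.mp (hGA hg) a).mp ha)
      simpa [Equiv.symm_apply_eq] using this
  have hmoved := hfix.resolve_left fun h =>
    hA ((eq_bot_iff_forall A).mpr fun a ha => Perm.ext fun y => h y a ha)
  push Not at hmoved
  obtain ⟨a, ha, hax⟩ := hmoved x
  exact ⟨⟨a, ha⟩, hax⟩

-- `R` meets every `A`-orbit and `G` permutes the `A`-orbits, so `G` cannot map a `d`-set
-- containing a whole orbit into the complement of `R`.
theorem isPretransitive_of_le_normalizer {d : ℕ} (hG : G.IsHomogeneous d)
    (hX : Fintype.card X = 2 * d) (hd : 0 < d) (hGA : G ≤ normalizer A) (hA : A ≠ ⊥) :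
    MulAction.IsPretransitive A X := by
  classical
  obtain ⟨R, hRcard, hR⟩ := MulAction.exists_two_mul_card_le_and_forall_exists_smul_mem
    (hG.exists_smul_ne_of_le_normalizer hd (by omega) hGA hA)
  let O (u : X) : Finset X := univ.filter (· ∈ MulAction.orbit A u)
  refine ⟨fun x y => by_contra fun hxy => ?_⟩
  obtain ⟨z, hz⟩ : ∃ z, #(O z) ≤ d := by
    have hdisj : Disjoint (O x) (O y) := by
      refine disjoint_left.mpr fun w hwx hwy => hxy ?_
      simp only [O, mem_filter, mem_univ, true_and, ← MulAction.orbit_eq_iff] at hwx hwy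
      rw [← MulAction.mem_orbit_iff, ← hwx, hwy]
      exact MulAction.mem_orbit_self y
    have := card_union_of_disjoint hdisj ▸ card_le_univ (O x ∪ O y)
    by_cases hOx : #(O x) ≤ d
    · exact ⟨x, hOx⟩
    · exact ⟨y, by omega⟩
  obtain ⟨s, hOs, -, hs⟩ := exists_subsuperset_card_eq (subset_univ (O z)) hz
    (by rw [card_univ, hX]; omega)
  obtain ⟨t, htR, ht⟩ := exists_subset_card_eq (s := univ \ R) (n := d)
    (by rw [card_sdiff_of_subset (subset_univ R), card_univ]; omega)
  obtain ⟨g, hg, rfl⟩ := hG s t hs ht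
  obtain ⟨a, haR⟩ := hR (g z)
  have hconj : g⁻¹ * a * g ∈ A := (mem_normalizer_iff''.mp (hGA hg) a).mp a.2
  have hmem : (a : Perm X) (g z) ∈ s.image g := by
    refine mem_image.mpr ⟨(g⁻¹ * a * g) z, hOs ?_, by simp⟩
    exact mem_filter.mpr ⟨mem_univ _, ⟨⟨_, hconj⟩, rfl⟩⟩
  exact (mem_sdiff.mp (htR hmem)).2 haR

theorem prime_dvd_natCard {d p : ℕ} (hG : G.IsHomogeneous d) (hX : Fintype.card X = 2 * d)
    (hp : p.Prime) (hdp : d < p) (hpd : p ≤ 2 * d) : p ∣ Nat.card G :=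
  (hp.dvd_choose hdp (by omega) hpd).trans (hX ▸ hG.choose_dvd_natCard (by omega))

theorem two_mul_eq_add_one_and_sq_eq_one {d p : ℕ} (hG : G.IsHomogeneous d)
    (hX : Fintype.card X = 2 * d) (hGA : G ≤ normalizer A) [IsMulCommutative A]
    [MulAction.IsPretransitive A X] (hp : p.Prime) (hdp : d < p) (hpd : p < 2 * d) :
    2 * d = p + 1 ∧ ∀ a ∈ A, a ^ 2 = 1 := by
  have := Fact.mk hp
  have : Nonempty X := Fintype.card_pos_iff.mp (by omega)
  obtain ⟨σ, hσ⟩ := exists_prime_orderOf_dvd_card' p (hG.prime_dvd_natCard hX hp hdp hpd.le)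
  rw [← orderOf_coe] at hσ
  obtain ⟨hXp, hfree⟩ :=
    card_eq_add_one_and_eq_one_of_commute (hGA σ.2) hp hσ (by omega) (by omega)
  have hAX := natCard_eq_card_of_isPretransitive (A := A)
  exact ⟨hX ▸ hXp, sq_eq_one_of_card_eq_prime_add_one (hGA σ.2) (hσ ▸ pow_orderOf_eq_one _)
    (by omega) ⟨d, by omega⟩ hfree⟩

theorem not_isSolvable {d : ℕ} (hG : G.IsHomogeneous d) (hX : Fintype.card X = 2 * d)
    (hd : 3 ≤ d) : ¬ Group.IsSolvable G := by
  intro hsolv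
  obtain ⟨p, hp, hdp, hpd⟩ := Nat.exists_prime_lt_and_le_two_mul d (by omega)
  replace hpd : p < 2 * d := hpd.lt_of_ne fun h => by
    have := hp.even_iff.mp ⟨d, by omega⟩
    omega
  have hGbot : G ≠ ⊥ := fun h => hp.one_lt.ne' <| Nat.dvd_one.mp <|
    card_bot (G := Perm X) ▸ h ▸ hG.prime_dvd_natCard hX hp hdp hpd.le
  obtain ⟨A, hAbot, hAcomm, hGA⟩ := exists_isMulCommutative_le_normalizer hGbot
  have := hG.isPretransitive_of_le_normalizer hX (by omega) hGA hAbot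
  have : Nonempty X := Fintype.card_pos_iff.mp (by omega)
  obtain ⟨k, hk⟩ := (IsPGroup.iff_card (p := 2)).mp fun a : A =>
    ⟨1, Subtype.ext ((hG.two_mul_eq_add_one_and_sq_eq_one hX hGA hp hdp hpd).2 a a.2)⟩
  obtain ⟨q, hq, hdq, hqd⟩ := Nat.exists_prime_lt_and_add_two_le_of_two_mul_eq_two_pow hd
    (hX ▸ natCard_eq_card_of_isPretransitive (A := A) ▸ hk)
  have := (hG.two_mul_eq_add_one_and_sq_eq_one hX hGA hq hdq (by omega)).1
  omega

end IsHomogeneous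

end Subgroup

/-- Let `d ≥ 1`, `X` a finite set with `2d` elements, and `G` a solvable subgroup of `Sym(X)`
permuting transitively the `d`-element subsets of `X`. Then either `|X| = 2` and `G = Sym(X)`,
or `|X| = 4` and `G` is `Sym(X)` or `Alt(X)`. -/
theorem solvable_transitive_on_d_subsets_even_classification
    {X : Type*} [Fintype X] [DecidableEq X] {d : ℕ} (hd : 1 ≤ d)
    (hcard : Fintype.card X = 2 * d)
    (G : Subgroup (Equiv.Perm X)) (hsolv : IsSolvable G)
    (htrans : ∀ s t : Finset X, s.card = d → t.card = d → ∃ g ∈ G, s.image ⇑g = t) :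
    (Fintype.card X = 2 ∧ G = ⊤) ∨
    (Fintype.card X = 4 ∧ (G = ⊤ ∨ G = alternatingGroup X)) := by
  have hG : G.IsHomogeneous d := htrans
  obtain rfl | rfl | hd3 : d = 1 ∨ d = 2 ∨ 3 ≤ d := by omega
  · exact .inl ⟨hcard, hG.eq_top_of_card_eq_two hcard⟩
  · exact .inr ⟨hcard, hG.eq_top_or_eq_alternatingGroup hcard⟩
  · exact absurd hsolv (hG.not_isSolvable hcard hd3)
end

section
/- Let V be a 3-dimensional vector space over F₂ and let G be the group of affine linear transformations x ↦ ax + b of F₈ (a ∈ F₈ˣ, b ∈ F₂³ = F₈), of order 56. Then G permutes the 4-element subsets of F₈ in exactly 2 orbits: one orbit of size 14 consisting of the subsets that are 2-dimensional linear subspaces or their complements, and one orbit of size 56 consisting of the remaining 4-element subsets, on which G acts simply transitively. -/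
/-- Two subsets of `𝔽₈` are affinely related if one is the image of the other under an affine
linear transformation `x ↦ ax + b`, `a ∈ 𝔽₈ˣ`, `b ∈ 𝔽₈`. -/
def AffRel (S T : Set (GaloisField 2 3)) : Prop :=
  ∃ (a : (GaloisField 2 3)ˣ) (b : GaloisField 2 3),
    T = (fun x => (a : GaloisField 2 3) * x + b) '' S

/-- A subset of `𝔽₈` which is a (2-dimensional) `𝔽₂`-linear subspace or the complement of one. -/
def IsSubspaceOrCompl (S : Set (GaloisField 2 3)) : Prop :=
  ∃ W : Submodule (ZMod 2) (GaloisField 2 3),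
    S = (W : Set (GaloisField 2 3)) ∨ S = (W : Set (GaloisField 2 3))ᶜ


set_option maxHeartbeats 2000000
set_option maxRecDepth 10000

namespace F8aux
def mulN : Nat → Nat → Nat
  | 0, 0 => 0
  | 0, 1 => 0
  | 0, 2 => 0
  | 0, 3 => 0
  | 0, 4 => 0
  | 0, 5 => 0
  | 0, 6 => 0
  | 0, 7 => 0
  | 1, 0 => 0
  | 1, 1 => 1
  | 1, 2 => 2
  | 1, 3 => 3
  | 1, 4 => 4
  | 1, 5 => 5
  | 1, 6 => 6
  | 1, 7 => 7
  | 2, 0 => 0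
  | 2, 1 => 2
  | 2, 2 => 4
  | 2, 3 => 6
  | 2, 4 => 3
  | 2, 5 => 1
  | 2, 6 => 7
  | 2, 7 => 5
  | 3, 0 => 0
  | 3, 1 => 3
  | 3, 2 => 6
  | 3, 3 => 5
  | 3, 4 => 7
  | 3, 5 => 4
  | 3, 6 => 1
  | 3, 7 => 2
  | 4, 0 => 0
  | 4, 1 => 4
  | 4, 2 => 3
  | 4, 3 => 7
  | 4, 4 => 6
  | 4, 5 => 2
  | 4, 6 => 5
  | 4, 7 => 1
  | 5, 0 => 0
  | 5, 1 => 5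
  | 5, 2 => 1
  | 5, 3 => 4
  | 5, 4 => 2
  | 5, 5 => 7
  | 5, 6 => 3
  | 5, 7 => 6
  | 6, 0 => 0
  | 6, 1 => 6
  | 6, 2 => 7
  | 6, 3 => 1
  | 6, 4 => 5
  | 6, 5 => 3
  | 6, 6 => 2
  | 6, 7 => 4
  | 7, 0 => 0
  | 7, 1 => 7
  | 7, 2 => 5
  | 7, 3 => 2
  | 7, 4 => 1
  | 7, 5 => 6
  | 7, 6 => 4
  | 7, 7 => 3
  | _, _ => 0
def invN : Nat → Nat
  | 0 => 0
  | 1 => 1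
  | 2 => 5
  | 3 => 6
  | 4 => 7
  | 5 => 2
  | 6 => 3
  | 7 => 4
  | _ => 0
def F8 : Type := Fin 8

instance : DecidableEq F8 := instDecidableEqFin 8
instance : Fintype F8 := Fin.fintype 8

def el (n : Fin 8) : F8 := n
def vl (x : F8) : Fin 8 := x

instance : Zero F8 := ⟨el 0⟩
instance : One F8 := ⟨el 1⟩
instance : Add F8 := ⟨fun x y => el ⟨((vl x).1 ^^^ (vl y).1) % 8, Nat.mod_lt _ (by norm_num)⟩⟩
instance : Mul F8 := ⟨fun x y => el ⟨mulN (vl x).1 (vl y).1 % 8, Nat.mod_lt _ (by norm_num)⟩⟩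
instance : Neg F8 := ⟨id⟩
instance : Inv F8 := ⟨fun x => el ⟨invN (vl x).1 % 8, Nat.mod_lt _ (by norm_num)⟩⟩

instance instAddCommGroup : AddCommGroup F8 where
  add_assoc := by decide
  zero_add := by decide
  add_zero := by decide
  add_comm := by decide
  neg_add_cancel := by decide
  nsmul := nsmulRec
  zsmul := zsmulRec

instance instCommRing : CommRing F8 :=
  { instAddCommGroup with
    mul_assoc := by decide
    one_mul := by decide
    mul_one := by decide
    left_distrib := by decide
    right_distrib := by decide
    zero_mul := by decide
    mul_zero := by decide
    mul_comm := by decide }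

instance instField : Field F8 :=
  { instCommRing with
    exists_pair_ne := ⟨0, 1, by decide⟩
    mul_inv_cancel := by decide
    inv_zero := by decide
    nnqsmul := _
    qsmul := _ }

example : (1 : F8) + 1 = 0 := by decide
example : ∀ x : F8, x ≠ 0 → x * x⁻¹ = 1 := by decide

end F8aux

namespace F8aux
abbrev K := GaloisField 2 3

def φ : ZMod 2 →+* F8 where
  toFun := fun c => if c = 1 then 1 else 0
  map_one' := by decide
  map_mul' := by decide
  map_zero' := by decide
  map_add' := by decide

instance : Algebra (ZMod 2) F8 := φ.toAlgebra

noncomputable instance : Fintype K := Fintype.ofFinite _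

noncomputable def e : F8 ≃ₐ[ZMod 2] K :=
  FiniteField.algEquivOfCardEq 2 (by
    have h := GaloisField.card 2 3 (by norm_num)
    rw [Nat.card_eq_fintype_card] at h
    rw [h]; rfl)

def AddClosed {R : Type*} [Add R] [Zero R] (S : Set R) : Prop :=
  0 ∈ S ∧ ∀ x ∈ S, ∀ y ∈ S, x + y ∈ S

noncomputable def mkSub (T : Set K) (h : AddClosed T) : Submodule (ZMod 2) K where
  carrier := T
  add_mem' := fun hx hy => h.2 _ hx _ hy
  zero_mem' := h.1
  smul_mem' := by
    intro c x hx
    have hc : ∀ c : ZMod 2, c = 0 ∨ c = 1 := by decide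
    rcases hc c with rfl | rfl
    · simpa using h.1
    · simpa using hx

theorem subOrCompl_iff (S : Set K) :
    IsSubspaceOrCompl S ↔ (AddClosed S ∨ AddClosed Sᶜ) := by
  constructor
  · rintro ⟨W, rfl | rfl⟩
    · exact Or.inl ⟨W.zero_mem, fun x hx y hy => W.add_mem hx hy⟩
    · refine Or.inr ?_
      rw [compl_compl]
      exact ⟨W.zero_mem, fun x hx y hy => W.add_mem hx hy⟩
  · rintro (h | h)
    · exact ⟨mkSub S h, Or.inl rfl⟩
    · exact ⟨mkSub Sᶜ h, Or.inr (compl_compl S).symm⟩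

theorem addClosed_image {R R' : Type*} [Add R] [Zero R] [Add R'] [Zero R']
    (f : R → R') (hinj : Function.Injective f) (h0 : f 0 = 0)
    (hadd : ∀ x y, f (x + y) = f x + f y) (S : Set R) :
    AddClosed (f '' S) ↔ AddClosed S := by
  constructor
  · rintro ⟨hz, hsum⟩
    obtain ⟨x, hx, hfx⟩ := hz
    have hx0 : x = 0 := hinj (by rw [hfx, h0])
    refine ⟨hx0 ▸ hx, fun x hx y hy => ?_⟩
    obtain ⟨z, hz, hfz⟩ := hsum (f x) ⟨x, hx, rfl⟩ (f y) ⟨y, hy, rfl⟩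
    have : z = x + y := hinj (by rw [hfz, ← hadd])
    exact this ▸ hz
  · rintro ⟨hz, hsum⟩
    refine ⟨⟨0, hz, h0⟩, ?_⟩
    rintro _ ⟨x, hx, rfl⟩ _ ⟨y, hy, rfl⟩
    exact ⟨x + y, hsum x hx y hy, hadd x y⟩

theorem map_affine_image {R R' : Type*} [Mul R] [Add R] [Mul R'] [Add R']
    (f : R → R') (hmul : ∀ x y, f (x * y) = f x * f y)
    (hadd : ∀ x y, f (x + y) = f x + f y) (α β : R) (S : Set R) :
    f '' ((fun x => α * x + β) '' S) = (fun y => f α * y + f β) '' (f '' S) := by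
  rw [Set.image_image, Set.image_image]
  apply Set.image_congr
  intro x _
  simp [hadd, hmul]

def aff (a b : F8) (s : Finset F8) : Finset F8 := s.image (fun x => a * x + b)

def Cl (s : Finset F8) : Prop := (0 : F8) ∈ s ∧ ∀ x ∈ s, ∀ y ∈ s, x + y ∈ s
instance : DecidablePred Cl := fun s => by unfold Cl; infer_instance
def Qd (s : Finset F8) : Prop := Cl s ∨ Cl sᶜ
instance : DecidablePred Qd := fun s => by unfold Qd; infer_instance

theorem cl_coe (s : Finset F8) : AddClosed (↑s : Set F8) ↔ Cl s := by
  simp [AddClosed, Cl]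

theorem coe_aff (a b : F8) (s : Finset F8) :
    (aff a b s : Set F8) = (fun x => a * x + b) '' ↑s := Finset.coe_image

theorem subOrCompl_image_iff (s : Finset F8) :
    IsSubspaceOrCompl (⇑e '' ↑s) ↔ Qd s := by
  rw [subOrCompl_iff]
  have h1 : AddClosed (⇑e '' (↑s : Set F8)) ↔ Cl s :=
    (addClosed_image ⇑e e.injective (map_zero e) (map_add e) _).trans (cl_coe s)
  have h2 : AddClosed ((⇑e '' (↑s : Set F8))ᶜ) ↔ Cl sᶜ := by
    rw [← Set.image_compl_eq e.bijective, ← Finset.coe_compl]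
    exact (addClosed_image ⇑e e.injective (map_zero e) (map_add e) _).trans (cl_coe _)
  rw [h1, h2, Qd]

theorem ncard_image_coe (s : Finset F8) : (⇑e '' (↑s : Set F8)).ncard = s.card := by
  rw [Set.ncard_image_of_injective _ e.injective, Set.ncard_coe_finset]

theorem e_symm_ne_zero {α : K} (h : α ≠ 0) : e.symm α ≠ 0 := by
  intro h0
  apply h
  rw [← e.apply_symm_apply α, h0, map_zero]

theorem e_ne_zero {a : F8} (h : a ≠ 0) : e a ≠ 0 := by
  intro h0
  exact h (by rwa [← map_zero e, e.injective.eq_iff] at h0)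

theorem symm_img (X : Set F8) : ⇑e.symm '' (⇑e '' X) = X := by
  have := Equiv.symm_image_image e.toEquiv X
  simpa using this

theorem affRel_iff (s t : Finset F8) :
    AffRel (⇑e '' ↑s) (⇑e '' ↑t) ↔ ∃ a b : F8, a ≠ 0 ∧ t = aff a b s := by
  constructor
  · rintro ⟨α, β, h⟩
    refine ⟨e.symm α, e.symm β, e_symm_ne_zero α.ne_zero, ?_⟩
    apply Finset.coe_injective
    rw [coe_aff]
    have h2 := congrArg (Set.image ⇑e.symm) h
    rw [symm_img] at h2
    rw [h2]
    rw [map_affine_image ⇑e.symm (map_mul e.symm) (map_add e.symm) (α : K) β (⇑e '' ↑s), symm_img]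
  · rintro ⟨a, b, ha, rfl⟩
    refine ⟨Units.mk0 (e a) (e_ne_zero ha), e b, ?_⟩
    rw [coe_aff]
    rw [map_affine_image ⇑e (map_mul e) (map_add e) a b (↑s : Set F8), Units.val_mk0]

theorem exists_finset (S : Set K) (h : S.ncard = 4) :
    ∃ s : Finset F8, S = ⇑e '' ↑s ∧ s.card = 4 := by
  refine ⟨(Set.toFinite (⇑e.symm '' S)).toFinset, ?_, ?_⟩
  · rw [Set.Finite.coe_toFinset]
    have h2 := Equiv.image_symm_image e.toEquiv S
    exact h2.symm
  · rw [← Set.ncard_coe_finset, Set.Finite.coe_toFinset,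
      Set.ncard_image_of_injective _ e.symm.injective, h]

end F8aux
namespace F8aux
def s0 : Finset F8 := {el 0, el 1, el 2, el 3}
def s1 : Finset F8 := {el 0, el 1, el 2, el 4}
theorem s0_card : s0.card = 4 := by decide
theorem s1_card : s1.card = 4 := by decide
theorem s0_Qd : Qd s0 := by decide
theorem s1_nQd : ¬ Qd s1 := by decide
theorem C1 : Fintype.card {s : Finset F8 // s.card = 4 ∧ Qd s} = 14 := by decide
theorem C2 : Fintype.card {s : Finset F8 // s.card = 4 ∧ ¬ Qd s} = 56 := by decide
end F8aux
set_option maxRecDepth 10000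
namespace F8aux
theorem D2a : ∀ t : Finset F8, t.card = 4 → Qd t → ∃ a b : F8, a ≠ 0 ∧ t = aff a b s0 := by decide
theorem D2b : ∀ t : Finset F8, t.card = 4 → ¬ Qd t → ∃ a b : F8, a ≠ 0 ∧ t = aff a b s1 := by decide
end F8aux
namespace F8aux
theorem D1a : ∀ a b : F8, a ≠ 0 → Qd (aff a b s0) := by decide
theorem D1b : ∀ a b : F8, a ≠ 0 → ¬ Qd (aff a b s1) := by decide
theorem D3 : ∀ s : Finset F8, s.card = 4 → ¬ Qd s → ∀ a b : F8, a ≠ 0 →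
    (∀ x ∈ s, a * x + b ∈ s) → a = 1 ∧ b = 0 := by decide
end F8aux

namespace F8aux

theorem aff_card (a b : F8) (ha : a ≠ 0) (s : Finset F8) : (aff a b s).card = s.card := by
  apply Finset.card_image_of_injective
  intro x y h
  simp only at h
  exact mul_left_cancel₀ ha (add_right_cancel h)

theorem aff_aff (A B a b : F8) (s : Finset F8) :
    aff A B (aff a b s) = aff (A * a) (A * b + B) s := by
  simp only [aff, Finset.image_image]
  congr 1
  funext x
  simp only [Function.comp_apply]
  ring

theorem aff_id (s : Finset F8) : aff 1 0 s = s := by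
  simp [aff]

theorem aff_inv (a b : F8) (ha : a ≠ 0) (s : Finset F8) :
    aff a⁻¹ (-(a⁻¹ * b)) (aff a b s) = s := by
  rw [aff_aff, inv_mul_cancel₀ ha, add_neg_cancel, aff_id]

theorem P3 (s t : Finset F8) (hs4 : s.card = 4) (ht4 : t.card = 4) :
    (∃ a b : F8, a ≠ 0 ∧ t = aff a b s) ↔ (Qd s ↔ Qd t) := by
  constructor
  · rintro ⟨a, b, ha, rfl⟩
    constructor
    · intro hs
      obtain ⟨a', b', ha', hs0⟩ := D2a s hs4 hs
      rw [hs0, aff_aff]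
      exact D1a _ _ (mul_ne_zero ha ha')
    · intro ht
      by_contra hns
      obtain ⟨a', b', ha', hs1⟩ := D2b s hs4 hns
      rw [hs1, aff_aff] at ht
      exact D1b _ _ (mul_ne_zero ha ha') ht
  · intro hiff
    by_cases hs : Qd s
    · have ht : Qd t := hiff.mp hs
      obtain ⟨a, b, ha, hs0⟩ := D2a s hs4 hs
      obtain ⟨c, d, hc, hts⟩ := D2a t ht4 ht
      have hback : aff a⁻¹ (-(a⁻¹ * b)) s = s0 := by rw [hs0, aff_inv a b ha]
      exact ⟨c * a⁻¹, c * (-(a⁻¹ * b)) + d, mul_ne_zero hc (inv_ne_zero ha),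
        by rw [hts, ← hback, aff_aff]⟩
    · have ht : ¬ Qd t := fun h => hs (hiff.mpr h)
      obtain ⟨a, b, ha, hs0⟩ := D2b s hs4 hs
      obtain ⟨c, d, hc, hts⟩ := D2b t ht4 ht
      have hback : aff a⁻¹ (-(a⁻¹ * b)) s = s1 := by rw [hs0, aff_inv a b ha]
      exact ⟨c * a⁻¹, c * (-(a⁻¹ * b)) + d, mul_ne_zero hc (inv_ne_zero ha),
        by rw [hts, ← hback, aff_aff]⟩

theorem P4 (s : Finset F8) (hs4 : s.card = 4) (hQ : ¬ Qd s) (a a' b b' : F8)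
    (ha : a ≠ 0) (ha' : a' ≠ 0) (h : aff a b s = aff a' b' s) : a = a' ∧ b = b' := by
  have h2 : aff (a'⁻¹ * a) (a'⁻¹ * b + -(a'⁻¹ * b')) s = s := by
    have := congrArg (aff a'⁻¹ (-(a'⁻¹ * b'))) h
    rwa [aff_aff, aff_inv a' b' ha'] at this
  have hmem : ∀ x ∈ s, (a'⁻¹ * a) * x + (a'⁻¹ * b + -(a'⁻¹ * b')) ∈ s := by
    intro x hx
    rw [← h2]
    exact Finset.mem_image_of_mem _ hx
  obtain ⟨h1, h0⟩ := D3 s hs4 hQ _ _ (mul_ne_zero (inv_ne_zero ha') ha) hmem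
  constructor
  · have h5 := congrArg (a' * ·) h1
    simp only [← mul_assoc, mul_inv_cancel₀ ha', one_mul, mul_one] at h5
    exact h5
  · have hb : a'⁻¹ * b = a'⁻¹ * b' := by
      rwa [add_neg_eq_zero] at h0
    exact mul_left_cancel₀ (inv_ne_zero ha') hb

end F8aux

namespace F8aux

noncomputable def EK : Finset F8 ≃ Set K :=
  Fintype.finsetEquivSet.trans (Equiv.Set.congr e.toEquiv)

theorem EK_apply (s : Finset F8) : EK s = ⇑e '' ↑s := rfl

noncomputable def cardEquiv1 :
    {s : Finset F8 // s.card = 4 ∧ Qd s} ≃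
      {S : Set K // S.ncard = 4 ∧ IsSubspaceOrCompl S} :=
  EK.subtypeEquiv (fun s => by
    rw [EK_apply, ncard_image_coe, subOrCompl_image_iff])

noncomputable def cardEquiv2 :
    {s : Finset F8 // s.card = 4 ∧ ¬ Qd s} ≃
      {S : Set K // S.ncard = 4 ∧ ¬ IsSubspaceOrCompl S} :=
  EK.subtypeEquiv (fun s => by
    rw [EK_apply, ncard_image_coe, subOrCompl_image_iff])

end F8aux


/-- The group `G` of affine linear transformations of `𝔽₈` (of order 56) permutes the
4-element subsets of `𝔽₈` in exactly 2 orbits: one orbit of size 14 consisting of the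
2-dimensional linear subspaces and their complements, and one orbit of size 56 consisting of
the remaining 4-element subsets, on which `G` acts simply transitively. -/
theorem affine_group_F8_orbits_on_four_subsets :
    Nat.card {S : Set (GaloisField 2 3) // S.ncard = 4 ∧ IsSubspaceOrCompl S} = 14 ∧
    Nat.card {S : Set (GaloisField 2 3) // S.ncard = 4 ∧ ¬ IsSubspaceOrCompl S} = 56 ∧
    (∀ S T : Set (GaloisField 2 3), S.ncard = 4 → T.ncard = 4 →
      (AffRel S T ↔ (IsSubspaceOrCompl S ↔ IsSubspaceOrCompl T))) ∧
    (∀ S : Set (GaloisField 2 3), S.ncard = 4 → ¬ IsSubspaceOrCompl S →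
      ∀ (a a' : (GaloisField 2 3)ˣ) (b b' : GaloisField 2 3),
        (fun x => (a : GaloisField 2 3) * x + b) '' S
          = (fun x => (a' : GaloisField 2 3) * x + b') '' S → a = a' ∧ b = b') := by
  open F8aux in
  refine ⟨?_, ?_, ?_, ?_⟩
  · rw [← Nat.card_congr cardEquiv1, Nat.card_eq_fintype_card]
    exact C1
  · rw [← Nat.card_congr cardEquiv2, Nat.card_eq_fintype_card]
    exact C2
  · intro S T hS hT
    obtain ⟨s, rfl, hs4⟩ := exists_finset S hS
    obtain ⟨t, rfl, ht4⟩ := exists_finset T hT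
    rw [affRel_iff, subOrCompl_image_iff, subOrCompl_image_iff]
    exact P3 s t hs4 ht4
  · intro S hS hQ a a' b b' h
    obtain ⟨s, rfl, hs4⟩ := exists_finset S hS
    rw [subOrCompl_image_iff] at hQ
    have h2 := congrArg (Set.image ⇑e.symm) h
    rw [map_affine_image ⇑e.symm (map_mul e.symm) (map_add e.symm) (↑a) b,
        map_affine_image ⇑e.symm (map_mul e.symm) (map_add e.symm) (↑a') b',
        symm_img] at h2
    have h3 : aff (e.symm ↑a) (e.symm b) s = aff (e.symm ↑a') (e.symm b') s := by
      apply Finset.coe_injective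
      rw [coe_aff, coe_aff]
      exact h2
    obtain ⟨ha, hb⟩ := P4 s hs4 hQ _ _ _ _ (e_symm_ne_zero a.ne_zero)
      (e_symm_ne_zero a'.ne_zero) h3
    exact ⟨Units.ext (e.symm.injective ha), e.symm.injective hb⟩
end

section
/- Let ζ ∈ GL₆(F₂) act on E = F₂⁶ preserving the symplectic form, defined on the symplectic basis by ζ: e₁↦e₂, e₂↦e₃, e₃↦e₁+e₂, f₁↦f₁+f₂, f₂↦f₃, f₃↦f₁. Then ζ has order 7, the characteristic polynomial of ζ on V = span(e₁,e₂,e₃) is T³+T+1 and on V^∨ = span(f₁,f₂,f₃) is T³+T²+1, so that det(T−ζ, E) = (T⁷−1)/(T−1), and V, V^∨ are irreducible non-isomorphic F₂[ζ]-modules whose only ζ-submodules of E are 0, V, V^∨, E. -/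
open Polynomial

/-- The matrix of `ζ` on `V = span(e₁,e₂,e₃)`: `e₁ ↦ e₂, e₂ ↦ e₃, e₃ ↦ e₁ + e₂`. -/
def zetaV : Matrix (Fin 3) (Fin 3) (ZMod 2) := !![0, 0, 1; 1, 0, 1; 0, 1, 0]

/-- The matrix of `ζ` on `V^∨ = span(f₁,f₂,f₃)`: `f₁ ↦ f₁ + f₂, f₂ ↦ f₃, f₃ ↦ f₁`. -/
def zetaW : Matrix (Fin 3) (Fin 3) (ZMod 2) := !![1, 0, 1; 1, 0, 0; 0, 1, 0]

/-- `ζ` as a linear endomorphism of `E = V × V^∨ = 𝔽₂⁶`. -/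
noncomputable def zetaE :
    ((Fin 3 → ZMod 2) × (Fin 3 → ZMod 2)) →ₗ[ZMod 2]
      ((Fin 3 → ZMod 2) × (Fin 3 → ZMod 2)) :=
  (Matrix.toLin' zetaV).prodMap (Matrix.toLin' zetaW)

/-- The standard symplectic form on `E = 𝔽₂⁶`. -/
def sympForm (u v : (Fin 3 → ZMod 2) × (Fin 3 → ZMod 2)) : ZMod 2 :=
  (∑ i, u.1 i * v.2 i) + ∑ i, u.2 i * v.1 i

/-!
`ζ` is the block sum of `zetaV` and `zetaW`, and `zetaW` is the inverse transpose of `zetaV`,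
which is why `ζ` preserves the symplectic form. The two blocks have different, hence
non-conjugate, characteristic polynomials; these are coprime, so by Bézout and Cayley–Hamilton
some polynomial in `ζ` is the projection of `E` onto `V` along `V^∨`, and every `ζ`-invariant
subspace is the sum of its intersections with `V` and `V^∨`. Each intersection is `0` or
everything, since every nonzero vector of `𝔽₂³` is cyclic for both blocks.
-/

open Matrix

section General

variable {R : Type*} [CommRing R] {n : Type*} [Fintype n] [DecidableEq n]

theorem Matrix.dotProduct_mulVec_mulVec_of_transpose_mul_eq_one {A B : Matrix n n R}
    (h : Aᵀ * B = 1) (a b : n → R) : A *ᵥ a ⬝ᵥ B *ᵥ b = a ⬝ᵥ b := by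
  rw [dotProduct_mulVec, ← vecMul_transpose, vecMul_vecMul, h, vecMul_one]

theorem Matrix.charpoly_eq_of_intertwining {A B : Matrix n n R} (φ : (n → R) ≃ₗ[R] (n → R))
    (h : ∀ x, φ (A *ᵥ x) = B *ᵥ φ x) : A.charpoly = B.charpoly := by
  have hconj : φ.conj (toLin' A) = toLin' B := by
    refine LinearMap.ext fun x => ?_
    simp [LinearEquiv.conj_apply, h]
  rw [← charpoly_toLin' A, ← charpoly_toLin' B, ← hconj, LinearEquiv.charpoly_conj]

theorem Matrix.det_fin_three_of (a b c d e f g h i : R) :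
    !![a, b, c; d, e, f; g, h, i].det =
      a * e * i - a * f * h - b * d * i + b * f * g + c * d * h - c * e * g := by
  simp [det_fin_three]

theorem Matrix.orderOf_toLin' (A : Matrix n n R) : orderOf (toLin' A) = orderOf A :=
  MulEquiv.orderOf_eq (toLinAlgEquiv' : Matrix n n R ≃ₐ[R] _).toMulEquiv A

theorem Matrix.exists_aeval_toLin'_eq_of_eq_smul_add {A : Matrix n n R} {v w : n → R} {a b c : R}
    (h : w = a • v + b • A *ᵥ v + c • A *ᵥ (A *ᵥ v)) :
    ∃ p : R[X], w = aeval (toLin' A) p v :=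
  ⟨C a + C b * X + C c * X ^ 2, by simp [h, sq, Module.End.mul_apply, toLin'_apply]⟩

theorem Matrix.aeval_toLin'_charpoly (A : Matrix n n R) : aeval (toLin' A) A.charpoly = 0 :=
  charpoly_toLin' A ▸ LinearMap.aeval_self_charpoly (toLin' A)

end General

section ProdMap

variable {R M N : Type*} [CommRing R] [AddCommGroup M] [AddCommGroup N] [Module R M] [Module R N]

theorem LinearMap.orderOf_prodMap (f : Module.End R M) (g : Module.End R N) :
    orderOf (f.prodMap g) = (orderOf f).lcm (orderOf g) := by
  have hinj : Function.Injective (prodMapRingHom R M N) := by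
    intro p q hpq
    ext x
    · exact congrArg (fun h : Module.End R (M × N) => (h (x, 0)).1) hpq
    · exact congrArg (fun h : Module.End R (M × N) => (h (0, x)).2) hpq
  rw [← Prod.orderOf_mk]
  exact orderOf_injective (prodMapRingHom R M N).toMonoidHom hinj (f, g)

theorem Submodule.eq_prod_comap_inl_comap_inr_of_isCoprime {f : Module.End R M}
    {g : Module.End R N} {p q : R[X]} (hpq : IsCoprime p q) (hp : aeval f p = 0)
    (hq : aeval g q = 0) {W : Submodule R (M × N)} (hW : ∀ v ∈ W, f.prodMap g v ∈ W) :
    W = (W.comap (LinearMap.inl R M N)).prod (W.comap (LinearMap.inr R M N)) := by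
  obtain ⟨a, b, hab⟩ := hpq
  have hproj : ∀ x y, aeval (f.prodMap g) (b * q) (x, y) = (x, 0) := by
    intro x y
    have hf : aeval f (b * q) = 1 := by
      rw [← sub_eq_of_eq_add' hab.symm, map_sub, map_one, map_mul, hp, mul_zero, sub_zero]
    have hg : aeval g (b * q) = 0 := by rw [map_mul, hq, mul_zero]
    change aeval (LinearMap.prodMapAlgHom R M N (f, g)) (b * q) (x, y) = _
    rw [aeval_algHom_apply, aeval_prod]
    simp [hf, hg]
  ext ⟨x, y⟩
  simp only [Submodule.mem_prod, Submodule.mem_comap, LinearMap.inl_apply, LinearMap.inr_apply]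
  refine ⟨fun hxy => ?_, fun ⟨hx, hy⟩ => by simpa using W.add_mem hx hy⟩
  have hx : (x, (0 : N)) ∈ W := hproj x y ▸ aeval_apply_smul_mem_of_le_comap hxy _ _ hW
  exact ⟨hx, by simpa using W.sub_mem hxy hx⟩

end ProdMap

theorem Module.End.eq_bot_or_eq_top_of_forall_cyclic {R M : Type*} [CommSemiring R]
    [AddCommMonoid M] [Module R M] {f : Module.End R M}
    (hf : ∀ v ≠ 0, ∀ w, ∃ p : R[X], w = aeval f p v) {U : Submodule R M}
    (hU : ∀ v ∈ U, f v ∈ U) : U = ⊥ ∨ U = ⊤ := by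
  refine (eq_or_ne U ⊥).imp_right fun hne => ?_
  obtain ⟨v, hv, hv0⟩ := U.exists_mem_ne_zero_of_ne_bot hne
  refine U.eq_top_iff'.2 fun w => ?_
  obtain ⟨p, rfl⟩ := hf v hv0 w
  exact aeval_apply_smul_mem_of_le_comap hv p f hU

theorem zetaE_apply (u : (Fin 3 → ZMod 2) × (Fin 3 → ZMod 2)) :
    zetaE u = (zetaV *ᵥ u.1, zetaW *ᵥ u.2) :=
  rfl

theorem sympForm_zetaE (u v : (Fin 3 → ZMod 2) × (Fin 3 → ZMod 2)) :
    sympForm (zetaE u) (zetaE v) = sympForm u v := by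
  have h : zetaVᵀ * zetaW = 1 := by decide
  change zetaV *ᵥ u.1 ⬝ᵥ zetaW *ᵥ v.2 + zetaW *ᵥ u.2 ⬝ᵥ zetaV *ᵥ v.1 = u.1 ⬝ᵥ v.2 + u.2 ⬝ᵥ v.1
  rw [dotProduct_comm (zetaW *ᵥ u.2), dotProduct_comm u.2,
    dotProduct_mulVec_mulVec_of_transpose_mul_eq_one h,
    dotProduct_mulVec_mulVec_of_transpose_mul_eq_one h]

theorem orderOf_zetaE : orderOf zetaE = 7 := by
  have : Fact (Nat.Prime 7) := ⟨by norm_num⟩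
  have hV : orderOf zetaV = 7 := orderOf_eq_prime (by decide) (by decide)
  have hW : orderOf zetaW = 7 := orderOf_eq_prime (by decide) (by decide)
  rw [zetaE, LinearMap.orderOf_prodMap, orderOf_toLin', orderOf_toLin', hV, hW, Nat.lcm_self]

theorem charpoly_zetaV : zetaV.charpoly = X ^ 3 + X + 1 := by
  have h : charmatrix zetaV = !![X, 0, -1; -1, X, -1; 0, -1, X] := by
    ext i j
    fin_cases i <;> fin_cases j <;> simp [zetaV]
  rw [charpoly, h, det_fin_three_of]
  linear_combination (-1 - X) * CharTwo.two_eq_zero (R := (ZMod 2)[X])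

theorem charpoly_zetaW : zetaW.charpoly = X ^ 3 + X ^ 2 + 1 := by
  have h : charmatrix zetaW = !![X - 1, 0, -1; -1, X, 0; 0, -1, X] := by
    ext i j
    fin_cases i <;> fin_cases j <;> simp [zetaW]
  rw [charpoly, h, det_fin_three_of]
  linear_combination (-1 - X ^ 2) * CharTwo.two_eq_zero (R := (ZMod 2)[X])

theorem charpoly_fromBlocks_zetaV_zetaW :
    (fromBlocks zetaV 0 0 zetaW).charpoly = ∑ i ∈ Finset.range 7, X ^ i := by
  rw [charpoly_fromBlocks_zero₁₂, charpoly_zetaV, charpoly_zetaW]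
  simp only [Finset.sum_range_succ, Finset.sum_range_zero]
  linear_combination X ^ 3 * CharTwo.two_eq_zero (R := (ZMod 2)[X])

theorem isCoprime_charpoly_zetaV_zetaW : IsCoprime zetaV.charpoly zetaW.charpoly := by
  rw [charpoly_zetaV, charpoly_zetaW]
  exact ⟨X, X + 1, by
    linear_combination (X ^ 4 + X ^ 3 + X ^ 2 + X) * CharTwo.two_eq_zero (R := (ZMod 2)[X])⟩

theorem not_exists_intertwining_zetaV_zetaW :
    ¬ ∃ φ : (Fin 3 → ZMod 2) ≃ₗ[ZMod 2] (Fin 3 → ZMod 2), ∀ x, φ (zetaV *ᵥ x) = zetaW *ᵥ φ x := by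
  rintro ⟨φ, hφ⟩
  have h := congrArg (coeff · 1) (charpoly_eq_of_intertwining φ hφ)
  simp [charpoly_zetaV, charpoly_zetaW] at h

theorem zetaV_forall_cyclic (v : Fin 3 → ZMod 2) (hv : v ≠ 0) (w : Fin 3 → ZMod 2) :
    ∃ p : (ZMod 2)[X], w = aeval (toLin' zetaV) p v := by
  have h : ∀ v : Fin 3 → ZMod 2, v ≠ 0 → ∀ w, ∃ a b c : ZMod 2,
      w = a • v + b • zetaV *ᵥ v + c • zetaV *ᵥ (zetaV *ᵥ v) := by decide
  obtain ⟨a, b, c, hw⟩ := h v hv w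
  exact exists_aeval_toLin'_eq_of_eq_smul_add hw

theorem zetaW_forall_cyclic (v : Fin 3 → ZMod 2) (hv : v ≠ 0) (w : Fin 3 → ZMod 2) :
    ∃ p : (ZMod 2)[X], w = aeval (toLin' zetaW) p v := by
  have h : ∀ v : Fin 3 → ZMod 2, v ≠ 0 → ∀ w, ∃ a b c : ZMod 2,
      w = a • v + b • zetaW *ᵥ v + c • zetaW *ᵥ (zetaW *ᵥ v) := by decide
  obtain ⟨a, b, c, hw⟩ := h v hv w
  exact exists_aeval_toLin'_eq_of_eq_smul_add hw

theorem zetaE_invariant_eq_bot_or_ker_snd_or_ker_fst_or_top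
    (W : Submodule (ZMod 2) ((Fin 3 → ZMod 2) × (Fin 3 → ZMod 2))) (hW : ∀ v ∈ W, zetaE v ∈ W) :
    W = ⊥ ∨
    W = LinearMap.ker (LinearMap.snd (ZMod 2) (Fin 3 → ZMod 2) (Fin 3 → ZMod 2)) ∨
    W = LinearMap.ker (LinearMap.fst (ZMod 2) (Fin 3 → ZMod 2) (Fin 3 → ZMod 2)) ∨
    W = ⊤ := by
  have hsplit := Submodule.eq_prod_comap_inl_comap_inr_of_isCoprime
    isCoprime_charpoly_zetaV_zetaW (aeval_toLin'_charpoly zetaV) (aeval_toLin'_charpoly zetaW) hW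
  have hV : W.comap (LinearMap.inl _ _ _) = ⊥ ∨ W.comap (LinearMap.inl _ _ _) = ⊤ :=
    Module.End.eq_bot_or_eq_top_of_forall_cyclic zetaV_forall_cyclic fun x hx => by
      simpa [zetaE_apply] using hW _ hx
  have hV' : W.comap (LinearMap.inr _ _ _) = ⊥ ∨ W.comap (LinearMap.inr _ _ _) = ⊤ :=
    Module.End.eq_bot_or_eq_top_of_forall_cyclic zetaW_forall_cyclic fun y hy => by
      simpa [zetaE_apply] using hW _ hy
  rcases hV with hV | hV <;> rcases hV' with hV' | hV' <;> rw [hsplit, hV, hV']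
  · exact Or.inl Submodule.prod_bot
  · refine Or.inr (Or.inr (Or.inl ?_))
    ext ⟨x, y⟩
    simp
  · refine Or.inr (Or.inl ?_)
    ext ⟨x, y⟩
    simp
  · exact Or.inr (Or.inr (Or.inr Submodule.prod_top))

/-- The element `ζ ∈ Sp₆(𝔽₂)` has order `7`; its characteristic polynomial on `V` is
`T³ + T + 1` and on `V^∨` is `T³ + T² + 1`, so `det(T − ζ, E) = (T⁷ − 1)/(T − 1)`;
`V` and `V^∨` are irreducible non-isomorphic `𝔽₂[ζ]`-modules, and the only `ζ`-submodules
of `E` are `0`, `V`, `V^∨`, `E`. -/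
theorem zeta_order_seven_and_submodule_lattice :
    (∀ u v, sympForm (zetaE u) (zetaE v) = sympForm u v) ∧
    orderOf zetaE = 7 ∧
    zetaV.charpoly = X ^ 3 + X + 1 ∧
    zetaW.charpoly = X ^ 3 + X ^ 2 + 1 ∧
    (Matrix.fromBlocks zetaV 0 0 zetaW).charpoly = ∑ i ∈ Finset.range 7, X ^ i ∧
    (¬ ∃ φ : (Fin 3 → ZMod 2) ≃ₗ[ZMod 2] (Fin 3 → ZMod 2),
      ∀ x, φ (zetaV.mulVec x) = zetaW.mulVec (φ x)) ∧
    ∀ W : Submodule (ZMod 2) ((Fin 3 → ZMod 2) × (Fin 3 → ZMod 2)),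
      (∀ v ∈ W, zetaE v ∈ W) →
      W = ⊥ ∨
      W = LinearMap.ker (LinearMap.snd (ZMod 2) (Fin 3 → ZMod 2) (Fin 3 → ZMod 2)) ∨
      W = LinearMap.ker (LinearMap.fst (ZMod 2) (Fin 3 → ZMod 2) (Fin 3 → ZMod 2)) ∨
      W = ⊤ :=
  ⟨sympForm_zetaE, orderOf_zetaE, charpoly_zetaV, charpoly_zetaW, charpoly_fromBlocks_zetaV_zetaW,
    not_exists_intertwining_zetaV_zetaW, zetaE_invariant_eq_bot_or_ker_snd_or_ker_fst_or_top⟩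
end
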